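/- Let S' = K[x_1,...,x_r], S'' = K[x_{r+1},...,x_n], S = K[x_1,...,x_n], and let I = Q_1 ∩ ... ∩ Q_s (s ≥ 2) be the irredundant presentation of a monomial ideal I as an intersection of irreducible monomial ideals; set Q = Σ_{i=1}^s Q_i. For a proper subset τ ⊂ {1,...,s}, let S_τ = K[x_i : 1 ≤ i ≤ r, x_i ∉ Σ_{j∈τ}√Q_j] and M_τ = {monomials u of S' with u ∉ Σ_{j∈τ}Q_j} ∩ K[x_i : x_i ∈ Σ_{j∈τ}√Q_j]. Then as K-vector spaces, S = (⊕_{u monomial in S'∖Q} u·S'') ⊕ (⊕_{τ ⊊ [s]} ⊕_{w ∈ M_τ} ((∩_{j∈[s]∖τ} Q_j ∩ w·S_τ)·S_τ[x_{r+1},...,x_n])). -/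

import Mathlib

open MvPolynomial

/-- The `K`-span of the monomials with exponent vectors in `E`. -/
noncomputable def monSpan (K : Type*) [Field K] {n : ℕ} (E : Set (Fin n →₀ ℕ)) :
    Submodule K (MvPolynomial (Fin n) K) :=
  Submodule.span K ((fun d => monomial d (1 : K)) '' E)

/-- A monomial ideal is *irreducible* if it is generated by pure powers of variables with
positive exponents. -/
def IsPurePowerIdeal {K : Type*} [Field K] {n : ℕ}
    (Q : Ideal (MvPolynomial (Fin n) K)) : Prop :=
  ∃ (T : Finset (Fin n)) (a : Fin n → ℕ), (∀ i ∈ T, 0 < a i) ∧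
    Q = Ideal.span ((fun i => (X i : MvPolynomial (Fin n) K) ^ a i) '' (T : Set (Fin n)))

/-- The set of variables of `S_τ`: those `x_i` with `i ≤ r` and `x_i ∉ Σ_{j ∈ τ} √(Q j)`. -/
def Zvars {K : Type*} [Field K] {n s : ℕ} (r : ℕ)
    (Q : Fin s → Ideal (MvPolynomial (Fin n) K)) (τ : Finset (Fin s)) : Set (Fin n) :=
  {i | (i : ℕ) < r ∧ (X i : MvPolynomial (Fin n) K) ∉ ∑ j ∈ τ, (Q j).radical}

/-- The exponent vectors of the monomials of
`M_τ = {u ∈ Mon(S') | u ∉ Σ_{j ∈ τ} Q j} ∩ K[x_i : x_i ∈ Σ_{j ∈ τ} √(Q j)]`,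
where `S' = K[x_1, ..., x_r]`. -/
def Mexp {K : Type*} [Field K] {n s : ℕ} (r : ℕ)
    (Q : Fin s → Ideal (MvPolynomial (Fin n) K)) (τ : Finset (Fin s)) :
    Set (Fin n →₀ ℕ) :=
  {u | (u.support : Set (Fin n)) ⊆ {i | (i : ℕ) < r} ∧
    monomial u (1 : K) ∉ ∑ j ∈ τ, Q j ∧
    (u.support : Set (Fin n)) ⊆
      {i | (X i : MvPolynomial (Fin n) K) ∈ ∑ j ∈ τ, (Q j).radical}}

/-- The summand `u·S''` of the decomposition, for a monomial `u` of `S' \ Q`: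
the `K`-span of the monomials `u·v` with `v` a monomial of `S'' = K[x_{r+1}, ..., x_n]`. -/
noncomputable def uSummand {K : Type*} [Field K] {n : ℕ} (r : ℕ) (u : Fin n →₀ ℕ) :
    Submodule K (MvPolynomial (Fin n) K) :=
  monSpan K {d | ∃ e : Fin n →₀ ℕ, (e.support : Set (Fin n)) ⊆ {i | r ≤ (i : ℕ)} ∧ d = u + e}

/-- The summand `(⋂_{j ∈ [s] \ τ} Q j ∩ w·S_τ)·S_τ[x_{r+1}, ..., x_n]` of the
decomposition: the `K`-span of the monomials `m·v` where `m ∈ ⋂_{j ∉ τ} Q j`,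
`m ∈ w·S_τ` and `v` is a monomial of `S_τ[x_{r+1}, ..., x_n]`. -/
noncomputable def tauSummand {K : Type*} [Field K] {n s : ℕ} (r : ℕ)
    (Q : Fin s → Ideal (MvPolynomial (Fin n) K)) (τ : Finset (Fin s)) (w : Fin n →₀ ℕ) :
    Submodule K (MvPolynomial (Fin n) K) :=
  monSpan K {d | ∃ m v : Fin n →₀ ℕ, d = m + v ∧
    monomial m (1 : K) ∈ (⨅ j ∈ τᶜ, Q j) ∧
    (∃ e : Fin n →₀ ℕ, (e.support : Set (Fin n)) ⊆ Zvars r Q τ ∧ m = w + e) ∧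
    (v.support : Set (Fin n)) ⊆ Zvars r Q τ ∪ {i | r ≤ (i : ℕ)}}

/-!
Each summand is the span of the monomials with exponents in an explicit set, so it suffices that
these sets partition `ℕⁿ`. Split a monomial `x^d` as `u · v` with `u ∈ S'` and `v ∈ S''`.
If `u ∉ Q` then `x^d` lies in `u·S''` only. Otherwise `τ = {j | u ∉ Q j}` is proper, and `x^d`
lies in the summand of `τ` and of the part `w` of `u` in the variables of `Σ_{j ∈ τ} √(Q j)`.
Conversely `τ` is recovered from `x^d`: each `Q j` is generated by powers of variables of
`√(Q j)`, so `u ∈ Q j` with `j ∈ τ` would force `w ∈ Σ_{j ∈ τ} Q j`.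
-/

open Function

namespace MvPolynomial

variable {σ R : Type*} [CommSemiring R]

theorem restrictSupport_iUnion {ι : Sort*} (E : ι → Set (σ →₀ ℕ)) :
    restrictSupport R (⋃ i, E i) = ⨆ i, restrictSupport R (E i) := by
  simp only [restrictSupport_eq_span, Set.image_iUnion, Submodule.span_iUnion]

theorem disjoint_restrictSupport {E₁ E₂ : Set (σ →₀ ℕ)} (h : Disjoint E₁ E₂) :
    Disjoint (restrictSupport R E₁) (restrictSupport R E₂) := by
  rw [Submodule.disjoint_def]
  intro p h₁ h₂
  rw [mem_restrictSupport_iff] at h₁ h₂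
  exact support_eq_empty.1 (Finset.coe_eq_empty.1 (Set.subset_empty_iff.1 (h h₁ h₂)))

theorem iSupIndep_restrictSupport {ι : Type*} {E : ι → Set (σ →₀ ℕ)}
    (hE : Pairwise (Disjoint on E)) : iSupIndep fun i => restrictSupport R (E i) := by
  intro i
  have hsup : ⨆ (j) (_ : j ≠ i), restrictSupport R (E j) =
      restrictSupport R (⋃ (j) (_ : j ≠ i), E j) := by
    rw [restrictSupport_iUnion]
    exact iSup_congr fun j => (restrictSupport_iUnion _).symm
  rw [hsup]
  exact disjoint_restrictSupport
    (Set.disjoint_iUnion_right.2 fun j => Set.disjoint_iUnion_right.2 fun hj => hE (Ne.symm hj))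

theorem iSup_restrictSupport_eq_top {ι : Type*} {E : ι → Set (σ →₀ ℕ)}
    (hE : ⋃ i, E i = Set.univ) : ⨆ i, restrictSupport R (E i) = ⊤ := by
  rw [← restrictSupport_iUnion, hE, restrictSupport_univ]

theorem monomial_one_mem_of_le {I : Ideal (MvPolynomial σ R)} {d d' : σ →₀ ℕ}
    (h : monomial d (1 : R) ∈ I) (hle : d ≤ d') : monomial d' (1 : R) ∈ I := by
  rw [← tsub_add_cancel_of_le hle, ← mul_one (1 : R), ← monomial_mul]
  exact I.mul_mem_left _ h

variable [Nontrivial R]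

theorem monomial_one_mem_span_monomial_iff {E : Set (σ →₀ ℕ)} {d : σ →₀ ℕ} :
    monomial d (1 : R) ∈ Ideal.span ((monomial · 1) '' E) ↔ ∃ e ∈ E, e ≤ d := by
  classical
  simp [mem_ideal_span_monomial_image, support_monomial]

theorem monomial_one_mem_sum_iff {ι : Type*} {Q : ι → Ideal (MvPolynomial σ R)}
    {E : ι → Set (σ →₀ ℕ)} (hQ : ∀ j, Q j = Ideal.span ((monomial · 1) '' E j))
    (τ : Finset ι) (d : σ →₀ ℕ) :
    monomial d (1 : R) ∈ ∑ j ∈ τ, Q j ↔ ∃ j ∈ τ, monomial d (1 : R) ∈ Q j := by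
  simp only [Ideal.sum_eq_sup, Finset.sup_eq_iSup, hQ, ← Ideal.span_iUnion, ← Set.image_iUnion,
    monomial_one_mem_span_monomial_iff, Set.mem_iUnion]
  exact ⟨fun ⟨e, ⟨j, hj, he⟩, hle⟩ => ⟨j, hj, e, he, hle⟩,
    fun ⟨j, hj, e, he, hle⟩ => ⟨e, ⟨j, hj, he⟩, hle⟩⟩

theorem monomial_one_filter_mem {Q : Ideal (MvPolynomial σ R)} {E : Set (σ →₀ ℕ)}
    (hQ : Q = Ideal.span ((monomial · 1) '' E)) {V : Set σ} [DecidablePred (· ∈ V)]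
    (hE : ∀ e ∈ E, ↑e.support ⊆ V) {d : σ →₀ ℕ} (h : monomial d (1 : R) ∈ Q) :
    monomial (d.filter (· ∈ V)) (1 : R) ∈ Q := by
  rw [hQ, monomial_one_mem_span_monomial_iff] at h ⊢
  obtain ⟨e, he, hle⟩ := h
  refine ⟨e, he, fun i => ?_⟩
  by_cases hi : i ∈ V
  · simpa [Finsupp.filter_apply_pos _ _ hi] using hle i
  · simp [Finsupp.notMem_support_iff.1 fun h => hi (hE e he h)]

end MvPolynomial

theorem IsPurePowerIdeal.exists_eq_span_monomial {K : Type*} [Field K] {n : ℕ}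
    {Q : Ideal (MvPolynomial (Fin n) K)} (hQ : IsPurePowerIdeal Q) :
    ∃ E : Set (Fin n →₀ ℕ), Q = Ideal.span ((monomial · 1) '' E) ∧
      ∀ e ∈ E, ↑e.support ⊆ {i | (X i : MvPolynomial (Fin n) K) ∈ Q.radical} := by
  obtain ⟨T, a, -, rfl⟩ := hQ
  refine ⟨(fun i => Finsupp.single i (a i)) '' T, ?_, ?_⟩
  · simp [Set.image_image, X_pow_eq_monomial]
  · rintro _ ⟨i, hi, rfl⟩ k hk
    obtain rfl := Finset.mem_singleton.1 (Finsupp.support_single_subset hk)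
    exact ⟨a k, Ideal.subset_span ⟨k, hi, rfl⟩⟩

theorem monomial_one_mem_sum_iff_of_isPurePowerIdeal {K : Type*} [Field K] {n : ℕ} {ι : Type*}
    {Q : ι → Ideal (MvPolynomial (Fin n) K)} (hQ : ∀ j, IsPurePowerIdeal (Q j))
    (τ : Finset ι) (d : Fin n →₀ ℕ) :
    monomial d (1 : K) ∈ ∑ j ∈ τ, Q j ↔ ∃ j ∈ τ, monomial d (1 : K) ∈ Q j := by
  choose E hQE _ using fun j => (hQ j).exists_eq_span_monomial
  exact monomial_one_mem_sum_iff hQE τ d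

theorem monSpan_eq_restrictSupport {K : Type*} [Field K] {n : ℕ} (E : Set (Fin n →₀ ℕ)) :
    monSpan K E = restrictSupport K E :=
  (restrictSupport_eq_span K E).symm

section Decomposition

variable {K : Type*} [Field K] {n s : ℕ} (r : ℕ) (Q : Fin s → Ideal (MvPolynomial (Fin n) K))

def radVars (τ : Finset (Fin s)) : Set (Fin n) :=
  {i | (X i : MvPolynomial (Fin n) K) ∈ ∑ j ∈ τ, (Q j).radical}

def lowPart (d : Fin n →₀ ℕ) : Fin n →₀ ℕ :=
  d.filter fun i => (i : ℕ) < r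

open Classical in
def tauExps (τ : Finset (Fin s)) (w : Fin n →₀ ℕ) : Set (Fin n →₀ ℕ) :=
  {d | (lowPart r d).filter (· ∈ radVars Q τ) = w ∧
    ∀ j ∉ τ, monomial (lowPart r d) (1 : K) ∈ Q j}

abbrev DecompIndex : Type _ :=
  {u : Fin n →₀ ℕ // (u.support : Set (Fin n)) ⊆ {i | (i : ℕ) < r} ∧
      monomial u (1 : K) ∉ ∑ j, Q j} ⊕
    (Σ τ : {τ : Finset (Fin s) // τ ≠ Finset.univ}, {w // w ∈ Mexp r Q τ.1})

def summandExps : DecompIndex r Q → Set (Fin n →₀ ℕ)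
  | .inl u => {d | lowPart r d = u.1}
  | .inr p => tauExps r Q p.1.1 p.2.1

theorem lowPart_apply (d : Fin n →₀ ℕ) (i : Fin n) :
    lowPart r d i = if (i : ℕ) < r then d i else 0 :=
  rfl

theorem uSummand_eq_monSpan {u : Fin n →₀ ℕ}
    (hu : ↑u.support ⊆ {i : Fin n | (i : ℕ) < r}) :
    uSummand (K := K) r u = monSpan K {d | lowPart r d = u} := by
  unfold uSummand
  congr 1
  ext d
  constructor
  · rintro ⟨e, he, rfl⟩
    ext i
    have hu0 : ¬ (i : ℕ) < r → u i = 0 := fun hi =>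
      Finsupp.notMem_support_iff.1 fun h => hi (hu h)
    have he0 : (i : ℕ) < r → e i = 0 := fun hi =>
      Finsupp.notMem_support_iff.1 fun h => (he h).not_gt hi
    simp only [lowPart_apply, Finsupp.add_apply]
    grind
  · rintro rfl
    exact ⟨d.filter fun i => ¬ (i : ℕ) < r, fun i hi => not_lt.1 (Finset.mem_filter.1 hi).2,
      (Finsupp.filter_add_filter_not _ _).symm⟩

theorem tauSummand_eq_monSpan {τ : Finset (Fin s)} {w : Fin n →₀ ℕ}
    (hw_low : ↑w.support ⊆ {i : Fin n | (i : ℕ) < r})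
    (hw_rad : ↑w.support ⊆ radVars Q τ) :
    tauSummand r Q τ w = monSpan K (tauExps r Q τ w) := by
  classical
  unfold tauSummand
  congr 1
  ext d
  constructor
  · rintro ⟨m, v, rfl, hm, ⟨e, he, rfl⟩, hv⟩
    have hw0 : ∀ i : Fin n, ¬ ((i : ℕ) < r ∧ i ∈ radVars Q τ) → w i = 0 := fun i hi =>
      Finsupp.notMem_support_iff.1 fun h => hi ⟨hw_low h, hw_rad h⟩
    have he0 : ∀ i : Fin n, ¬ ((i : ℕ) < r ∧ i ∉ radVars Q τ) → e i = 0 := fun i hi =>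
      Finsupp.notMem_support_iff.1 fun h => hi (he h)
    have hv0 : ∀ i : Fin n, (i : ℕ) < r → i ∈ radVars Q τ → v i = 0 := fun i hir hiR =>
      Finsupp.notMem_support_iff.1 fun h => (hv h).elim (fun h' => h'.2 hiR) fun h' => h'.not_gt hir
    refine ⟨?_, fun j hj => monomial_one_mem_of_le (d := w + e) ?_ fun i => ?_⟩
    · ext i
      simp only [Finsupp.filter_apply, lowPart_apply, Finsupp.add_apply]
      grind
    · simp only [Submodule.mem_iInf, Finset.mem_compl] at hm
      exact hm j hj
    · simp only [lowPart_apply, Finsupp.add_apply]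
      grind
  · rintro ⟨hw, hQ⟩
    refine ⟨lowPart r d, d.filter fun i => ¬ (i : ℕ) < r,
      (Finsupp.filter_add_filter_not _ _).symm, ?_,
      ⟨(lowPart r d).filter (· ∉ radVars Q τ), fun i hi => ?_, ?_⟩, fun i hi => ?_⟩
    · simp only [Submodule.mem_iInf, Finset.mem_compl]
      exact hQ
    · exact ⟨(Finset.mem_filter.1 (Finset.mem_filter.1 hi).1).2, (Finset.mem_filter.1 hi).2⟩
    · rw [← hw]
      exact (Finsupp.filter_add_filter_not _ _).symm
    · exact Or.inr (not_lt.1 (Finset.mem_filter.1 hi).2)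

variable {r Q}

theorem mem_iff_notMem_of_mem_tauExps (hQ : ∀ j, IsPurePowerIdeal (Q j)) {τ : Finset (Fin s)}
    {w d : Fin n →₀ ℕ} (hw : monomial w (1 : K) ∉ ∑ j ∈ τ, Q j)
    (hd : d ∈ tauExps r Q τ w) (j : Fin s) :
    j ∈ τ ↔ monomial (lowPart r d) (1 : K) ∉ Q j := by
  classical
  refine ⟨fun hj hmem => hw ?_, fun h => by_contra fun hj => h (hd.2 j hj)⟩
  obtain ⟨E, hQE, hE⟩ := (hQ j).exists_eq_span_monomial
  have hrad : (Q j).radical ≤ ∑ k ∈ τ, (Q k).radical :=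
    Finset.single_le_sum (f := fun k => (Q k).radical) (fun _ _ => zero_le) hj
  have hw_mem := monomial_one_filter_mem hQE (V := radVars Q τ)
    (fun e he i hi => hrad (hE e he hi)) hmem
  rw [hd.1] at hw_mem
  exact Finset.single_le_sum (f := Q) (fun _ _ => zero_le) hj hw_mem

theorem eq_of_mem_summandExps (hQ : ∀ j, IsPurePowerIdeal (Q j)) {d : Fin n →₀ ℕ}
    {i i' : DecompIndex r Q} (h : d ∈ summandExps r Q i) (h' : d ∈ summandExps r Q i') :
    i = i' := by
  have not_mem_inl_inr : ∀ u p,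
      d ∈ summandExps r Q (.inl u) → d ∈ summandExps r Q (.inr p) → False := by
    rintro ⟨u, _, hu⟩ ⟨⟨τ, hτ⟩, w, _⟩ (hdu : lowPart r d = u) hd
    subst hdu
    obtain ⟨j, hj⟩ : ∃ j, j ∉ τ := by simpa [Finset.eq_univ_iff_forall] using hτ
    exact hu (Finset.single_le_sum (f := Q) (fun _ _ => zero_le) (Finset.mem_univ j) (hd.2 j hj))
  match i, i', h, h' with
  | .inl u, .inl u', (h : lowPart r d = u.1), (h' : lowPart r d = u'.1) =>
    exact congrArg Sum.inl (Subtype.ext (h.symm.trans h'))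
  | .inl u, .inr p, h, h' => exact (not_mem_inl_inr u p h h').elim
  | .inr p, .inl u, h, h' => exact (not_mem_inl_inr u p h' h).elim
  | .inr ⟨⟨τ, hτ⟩, w, hw⟩, .inr ⟨⟨τ', hτ'⟩, w', hw'⟩, h, h' =>
    obtain rfl : τ = τ' := Finset.ext fun j => by
      rw [mem_iff_notMem_of_mem_tauExps hQ hw.2.1 h, mem_iff_notMem_of_mem_tauExps hQ hw'.2.1 h']
    obtain rfl : w = w' := h.1.symm.trans h'.1
    rfl

theorem filter_radVars_mem_Mexp (hQ : ∀ j, IsPurePowerIdeal (Q j)) {τ : Finset (Fin s)}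
    {u : Fin n →₀ ℕ} (hu : ↑u.support ⊆ {i : Fin n | (i : ℕ) < r})
    (hτ : ∀ j ∈ τ, monomial u (1 : K) ∉ Q j) :
    (open Classical in u.filter (· ∈ radVars Q τ)) ∈ Mexp r Q τ := by
  classical
  refine ⟨fun i hi => hu (Finset.mem_filter.1 hi).1, ?_, fun i hi => (Finset.mem_filter.1 hi).2⟩
  rw [monomial_one_mem_sum_iff_of_isPurePowerIdeal hQ]
  rintro ⟨j, hj, hmem⟩
  exact hτ j hj (monomial_one_mem_of_le hmem fun i => by
    rw [Finsupp.filter_apply]; split_ifs <;> simp)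

theorem exists_mem_summandExps (hQ : ∀ j, IsPurePowerIdeal (Q j)) (d : Fin n →₀ ℕ) :
    ∃ i : DecompIndex r Q, d ∈ summandExps r Q i := by
  classical
  have hlow : ↑(lowPart r d).support ⊆ {i : Fin n | (i : ℕ) < r} := fun i hi =>
    (Finset.mem_filter.1 hi).2
  set τ := Finset.univ.filter fun j => monomial (lowPart r d) (1 : K) ∉ Q j
  by_cases hτ : τ = Finset.univ
  · refine ⟨.inl ⟨lowPart r d, hlow, ?_⟩, rfl⟩
    rw [monomial_one_mem_sum_iff_of_isPurePowerIdeal hQ]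
    rintro ⟨j, -, hj⟩
    exact (Finset.mem_filter.1 (hτ ▸ Finset.mem_univ j : j ∈ τ)).2 hj
  · have hw := filter_radVars_mem_Mexp (τ := τ) hQ hlow fun j hj => (Finset.mem_filter.1 hj).2
    refine ⟨.inr ⟨⟨τ, hτ⟩, _, hw⟩, rfl, fun j hj => ?_⟩
    simpa [τ] using hj

end Decomposition

theorem S_decomposition_general {K : Type*} [Field K] {n s : ℕ} (r : ℕ)
    (Q : Fin s → Ideal (MvPolynomial (Fin n) K))
    (hirr : ∀ j, IsPurePowerIdeal (Q j))
    (F : ({u : Fin n →₀ ℕ // (u.support : Set (Fin n)) ⊆ {i | (i : ℕ) < r} ∧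
            monomial u (1 : K) ∉ ∑ j, Q j} ⊕
          (Σ τ : {τ : Finset (Fin s) // τ ≠ Finset.univ}, {w // w ∈ Mexp r Q τ.1})) →
      Submodule K (MvPolynomial (Fin n) K))
    (hF₁ : ∀ u, F (Sum.inl u) = uSummand r u.1)
    (hF₂ : ∀ p, F (Sum.inr p) = tauSummand r Q p.1.1 p.2.1) :
    iSupIndep F ∧ (⨆ i, F i) = ⊤ := by
  have hF : F = fun i => restrictSupport K (summandExps r Q i) := by
    funext i
    rw [← monSpan_eq_restrictSupport]
    rcases i with u | ⟨τ, w, hw⟩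
    · exact (hF₁ u).trans (uSummand_eq_monSpan r u.2.1)
    · exact (hF₂ _).trans (tauSummand_eq_monSpan r Q hw.1 hw.2.2)
  subst hF
  refine ⟨iSupIndep_restrictSupport fun i i' hii' => ?_, iSup_restrictSupport_eq_top ?_⟩
  · exact Set.disjoint_left.2 fun d h h' => hii' (eq_of_mem_summandExps hirr h h')
  · exact Set.eq_univ_of_forall fun d => Set.mem_iUnion.2 (exists_mem_summandExps hirr d)

/-- **Decomposition of `S`.** With `S' = K[x_1,...,x_r]`, `S'' = K[x_{r+1},...,x_n]` and
`I = Q 0 ∩ ... ∩ Q (s-1)` (`s ≥ 2`) an irredundant intersection of irreducible monomial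
ideals, the `K`-vector space `S` decomposes as the direct sum of the spaces `u·S''` for
monomials `u` of `S' \ Q` (`Q = Σ_j Q j`) and the spaces
`(⋂_{j ∉ τ} Q j ∩ w·S_τ)·S_τ[x_{r+1},...,x_n]` for proper subsets `τ ⊊ [s]` and `w ∈ M_τ`. -/
theorem S_decomposition {K : Type*} [Field K] {n s : ℕ} (r : ℕ) (hr : r ≤ n) (hs : 2 ≤ s)
    (Q : Fin s → Ideal (MvPolynomial (Fin n) K))
    (hirr : ∀ j, IsPurePowerIdeal (Q j))
    (hirred : ∀ i : Fin s, (⨅ j ∈ Finset.univ.erase i, Q j) ≠ ⨅ j, Q j)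
    (F : ({u : Fin n →₀ ℕ // (u.support : Set (Fin n)) ⊆ {i | (i : ℕ) < r} ∧
            monomial u (1 : K) ∉ ∑ j, Q j} ⊕
          (Σ τ : {τ : Finset (Fin s) // τ ≠ Finset.univ}, {w // w ∈ Mexp r Q τ.1})) →
      Submodule K (MvPolynomial (Fin n) K))
    (hF₁ : ∀ u, F (Sum.inl u) = uSummand r u.1)
    (hF₂ : ∀ p, F (Sum.inr p) = tauSummand r Q p.1.1 p.2.1) :
    iSupIndep F ∧ (⨆ i, F i) = ⊤ :=
  S_decomposition_general r Q hirr F hF₁ hF₂
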